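/- arXiv:2408.08040 — 2 statements merged into one kernel-verified Lean document; each statement's English description precedes it below -/
import Mathlib

section
/- Let Ω, D ⊆ ℝ^N (N ≥ 1) be open bounded sets with the closure of D contained in Ω, and set δ = dist(closure(D), ℝ^N \ Ω) > 0. If x₀ is any point of ∂Ω ∩ ∂(co(Ω)), then the distance from x₀ to the convex hull of closure(D) is at least δ, i.e. dist(x₀, co(closure(D))) ≥ δ. -/
open Metric Set Bornology

/-- Distance between two sets: the infimum over points of `A` of the distance to `B`. -/
noncomputable def setDist {E : Type*} [PseudoMetricSpace E] (A B : Set E) : ℝ :=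
  sInf ((fun x => Metric.infDist x B) '' A)

/-- If `Ω, D ⊆ ℝ^N` are open bounded sets with `closure D ⊆ Ω` and
`δ = dist(closure D, ℝ^N \ Ω) > 0`, then any point `x₀ ∈ ∂Ω ∩ ∂(co Ω)` is at distance
at least `δ` from the convex hull of `closure D`. -/
theorem infDist_frontier_convexHull_ge (N : ℕ) (hN : 1 ≤ N)
    (Ω D : Set (EuclideanSpace ℝ (Fin N)))
    (hΩopen : IsOpen Ω) (hΩbdd : IsBounded Ω)
    (hDopen : IsOpen D) (hDbdd : IsBounded D)
    (hDΩ : closure D ⊆ Ω)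
    (δ : ℝ) (hδ : δ = setDist (closure D) Ωᶜ) (hδpos : 0 < δ)
    (x₀ : EuclideanSpace ℝ (Fin N))
    (hx₀ : x₀ ∈ frontier Ω ∩ frontier (convexHull ℝ Ω)) :
    δ ≤ Metric.infDist x₀ (convexHull ℝ (closure D)) := by
  classical
  -- D is nonempty, else δ = 0
  rcases D.eq_empty_or_nonempty with hDe | hDne
  · exfalso
    rw [hδ, hDe, closure_empty] at hδpos
    have : setDist (∅ : Set (EuclideanSpace ℝ (Fin N))) Ωᶜ = 0 := by
      simp [setDist]
    rw [this] at hδpos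
    exact lt_irrefl 0 hδpos
  have hclDne : (closure D).Nonempty := hDne.closure
  have hΩne : Ω.Nonempty := hclDne.mono hDΩ
  -- Ω ⊆ interior (convexHull ℝ Ω)
  have hsub : Ω ⊆ interior (convexHull ℝ Ω) :=
    hΩopen.subset_interior_iff.mpr (subset_convexHull ℝ Ω)
  have hx₀ni : x₀ ∉ interior (convexHull ℝ Ω) := hx₀.2.2
  obtain ⟨f, hf⟩ := geometric_hahn_banach_open_point
    ((convex_convexHull ℝ Ω).interior) isOpen_interior hx₀ni
  set u : EuclideanSpace ℝ (Fin N) := (InnerProductSpace.toDual ℝ (EuclideanSpace ℝ (Fin N))).symm f with hu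
  have hfu : ∀ z : EuclideanSpace ℝ (Fin N), inner ℝ u z = f z := fun z =>
    InnerProductSpace.toDual_symm_apply
  -- u ≠ 0
  have hune : u ≠ 0 := by
    intro h0
    obtain ⟨a, ha⟩ := hΩne
    have := hf a (hsub ha)
    rw [← hfu a, ← hfu x₀, h0] at this
    simp at this
  have hunorm : (0:ℝ) < ‖u‖ := norm_pos_iff.mpr hune
  -- each point of closure D is at distance ≥ δ from Ωᶜ
  have hd : ∀ d ∈ closure D, δ ≤ infDist d Ωᶜ := by
    intro d hdD
    rw [hδ, setDist]
    exact csInf_le ⟨0, by rintro _ ⟨x, _, rfl⟩; exact infDist_nonneg⟩ (mem_image_of_mem _ hdD)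
  -- balls of radius δ around points of closure D lie in Ω
  have hball : ∀ d ∈ closure D, ball d δ ⊆ Ω := by
    intro d hdD y hy
    by_contra hyΩ
    have h1 : infDist d Ωᶜ ≤ dist d y := infDist_le_dist_of_mem hyΩ
    rw [mem_ball, dist_comm] at hy
    have := hd d hdD
    linarith
  -- key: separation with gap δ‖u‖
  have key : ∀ d ∈ closure D, (inner ℝ u d : ℝ) + δ * ‖u‖ ≤ inner ℝ u x₀ := by
    intro d hdD
    by_contra hc
    push_neg at hc
    set C : ℝ := (inner ℝ u x₀ : ℝ) - inner ℝ u d with hC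
    have hCpos : 0 < C := by
      have hdΩ : d ∈ Ω := hball d hdD (mem_ball_self hδpos)
      have := hf d (hsub hdΩ)
      rw [← hfu d, ← hfu x₀] at this
      simp only [hC]
      linarith
    have hlt : C / ‖u‖ < δ := by
      rw [div_lt_iff₀ hunorm]
      linarith
    set t : ℝ := (C / ‖u‖ + δ) / 2 with ht
    have ht1 : C / ‖u‖ < t := by rw [ht]; linarith
    have ht2 : t < δ := by rw [ht]; linarith
    have htpos : 0 < t := lt_trans (div_pos hCpos hunorm) ht1
    set p : EuclideanSpace ℝ (Fin N) := d + (t * ‖u‖⁻¹) • u with hp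
    have hpb : p ∈ ball d δ := by
      rw [mem_ball, hp, dist_comm, dist_eq_norm]
      have hsimp : d - (d + (t * ‖u‖⁻¹) • u) = -((t * ‖u‖⁻¹) • u) := by abel
      rw [hsimp, norm_neg, norm_smul]
      rw [Real.norm_eq_abs, abs_of_pos (by positivity)]
      rw [mul_assoc, inv_mul_cancel₀ (ne_of_gt hunorm), mul_one]
      exact ht2
    have hfp := hf p (hsub (hball d hdD hpb))
    rw [← hfu p, ← hfu x₀, hp] at hfp
    rw [inner_add_right, real_inner_smul_right, real_inner_self_eq_norm_sq] at hfp
    have hcalc : t * ‖u‖⁻¹ * (‖u‖ ^ 2) = t * ‖u‖ := by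
      field_simp
    rw [hcalc] at hfp
    have : C < t * ‖u‖ := (div_lt_iff₀ hunorm).mp ht1
    simp only [hC] at this
    linarith
  -- the halfspace contains the convex hull of closure D
  have hhull : convexHull ℝ (closure D) ⊆ {y : EuclideanSpace ℝ (Fin N) | (inner ℝ u y : ℝ) ≤ inner ℝ u x₀ - δ * ‖u‖} := by
    apply convexHull_min
    · intro d hdD
      have := key d hdD
      simp only [mem_setOf_eq]
      linarith
    · exact convex_halfSpace_le ⟨fun a b => inner_add_right u a b,
        fun c a => real_inner_smul_right u a c⟩ _
  -- conclude
  have hne : (convexHull ℝ (closure D)).Nonempty :=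
    hclDne.mono (subset_convexHull ℝ _)
  by_contra hlt
  push_neg at hlt
  rw [infDist_lt_iff hne] at hlt
  obtain ⟨y, hy, hdy⟩ := hlt
  have hy' := hhull hy
  simp only [mem_setOf_eq] at hy'
  have h1 : δ * ‖u‖ ≤ (inner ℝ u (x₀ - y) : ℝ) := by
    rw [inner_sub_right]; linarith
  have h2 : (inner ℝ u (x₀ - y) : ℝ) ≤ ‖u‖ * ‖x₀ - y‖ := real_inner_le_norm u _
  have h3 : δ * ‖u‖ ≤ ‖u‖ * ‖x₀ - y‖ := le_trans h1 h2
  rw [dist_eq_norm] at hdy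
  nlinarith
end

section
/- Let (Θ, 𝔉, P) be a probability space and, for each n ∈ ℕ, let ξ_{1,n}, ξ_{2,n} : Θ → ℝ be random variables such that each ξ_{i,n} (i = 1,2, n ∈ ℕ) is uniformly distributed on [−1,1] and the whole family {ξ_{1,n} : n ∈ ℕ} ∪ {ξ_{2,n} : n ∈ ℕ} is mutually independent. Let η₁, η₂, L > 0 and let ε satisfy 0 < ε < η₁ + η₂L. Then the event that ε + η₁ξ_{1,n} + η₂Lξ_{2,n} ≥ 0 holds for every n ∈ ℕ has probability zero: P(∀ n ∈ ℕ, ε + η₁ξ_{1,n} + η₂Lξ_{2,n} ≥ 0) = 0. (This is the probabilistic core of the theorem stating that, with noisy data, the unregularized monotonicity reconstruction is empty with probability one.) -/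
/-!
Put `a := -ε / (η₁ + η₂ L)`; the hypothesis `ε < η₁ + η₂ L` says exactly that `-1 < a`, so
`q := P(ξ < a)` is positive for a uniform variable on `[-1, 1]`. If both `ξ (0, n)` and
`ξ (1, n)` lie below `a`, then `ε + η₁ ξ (0, n) + η₂ L ξ (1, n) < 0`, so the `n`-th event has
probability at most `1 - q²`. The events for different `n` depend on disjoint blocks of the
independent family, hence are independent, and their intersection has probability at most
`(1 - q²)^N` for every `N`.
-/

open MeasureTheory ProbabilityTheory Set Function

theorem smul_volume_restrict_Icc_Iio_pos {c : ENNReal} (hc : c ≠ 0) {l u a : ℝ} (hlu : l < u)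
    (hla : l < a) : 0 < (c • volume.restrict (Icc l u)) (Iio a) := by
  rw [Measure.smul_apply, Measure.restrict_apply measurableSet_Iio, smul_eq_mul]
  refine ENNReal.mul_pos hc (ne_of_gt ?_) |>.bot_lt
  calc (0 : ENNReal) < volume (Ioo l (min a u)) := by simp [hla, hlu]
    _ ≤ volume (Iio a ∩ Icc l u) := measure_mono fun x hx ↦
        ⟨hx.2.trans_le (min_le_left _ _), hx.1.le, (hx.2.trans_le (min_le_right _ _)).le⟩

theorem add_add_mul_neg_of_lt_neg_div {ε α β x y : ℝ} (hα : 0 < α) (hβ : 0 < β)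
    (hx : x < -ε / (α + β)) (hy : y < -ε / (α + β)) : ε + α * x + β * y < 0 := by
  have h : (α + β) * (-ε / (α + β)) = -ε := mul_div_cancel₀ _ (by positivity)
  nlinarith [mul_lt_mul_of_pos_left hx hα, mul_lt_mul_of_pos_left hy hβ]

namespace ProbabilityTheory

variable {Ω ι κ : Type*} {mΩ : MeasurableSpace Ω} {μ : Measure Ω}

theorem iIndep.biSup_of_pairwise_disjoint {m : ι → MeasurableSpace Ω} (h_le : ∀ i, m i ≤ mΩ)
    (h : iIndep m μ) {S : κ → Set ι} (hS : Pairwise (Disjoint on S)) :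
    iIndep (fun k ↦ ⨆ i ∈ S k, m i) μ := by
  classical
  rw [iIndep_iff]
  intro s
  induction s using Finset.induction_on with
  | empty => simp [h.isProbabilityMeasure.measure_univ]
  | insert k s hk ih =>
    intro f hf
    have h_disj : Disjoint (S k) (⋃ j ∈ s, S j) :=
      disjoint_iUnion₂_right.2 fun j hj ↦ hS (ne_of_mem_of_not_mem hj hk).symm
    have h_rest : MeasurableSet[⨆ i ∈ ⋃ j ∈ s, S j, m i] (⋂ j ∈ s, f j) :=
      Finset.measurableSet_biInter s fun j hj ↦
        (show (⨆ i ∈ S j, m i) ≤ ⨆ i ∈ ⋃ j ∈ s, S j, m i from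
          biSup_mono fun i hi ↦ mem_iUnion₂.2 ⟨j, hj, hi⟩) _ (hf j (Finset.mem_insert_of_mem hj))
    rw [Finset.set_biInter_insert, Finset.prod_insert hk,
      (Indep_iff _ _ _).1 (indep_iSup_of_disjoint h_le h h_disj) _ _
        (hf k (Finset.mem_insert_self k s)) h_rest,
      ih fun j hj ↦ hf j (Finset.mem_insert_of_mem hj)]

theorem iIndepSet.measure_iInter_eq_zero {B : ℕ → Set Ω} (h : iIndepSet B μ) {c : ENNReal}
    (hc : c < 1) (hB : ∀ n, μ (B n) ≤ c) : μ (⋂ n, B n) = 0 := by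
  have h_fin (N : ℕ) : μ (⋂ n, B n) ≤ c ^ N :=
    calc μ (⋂ n, B n) ≤ μ (⋂ n ∈ Finset.range N, B n) :=
          measure_mono (iInter_subset_iInter₂ (· ∈ Finset.range N) B)
      _ = ∏ n ∈ Finset.range N, μ (B n) := h.meas_biInter _
      _ ≤ ∏ _n ∈ Finset.range N, c := Finset.prod_le_prod' fun n _ ↦ hB n
      _ = c ^ N := by rw [Finset.prod_const, Finset.card_range]
  exact le_antisymm
    (ge_of_tendsto' (ENNReal.tendsto_pow_atTop_nhds_zero_of_lt_one hc) h_fin) zero_le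

theorem iIndepFun.iIndepSet_preimage {β : ι → Type*} {m : ∀ i, MeasurableSpace (β i)}
    {f : ∀ i, Ω → β i} (h : iIndepFun f μ) {A : ∀ i, Set (β i)} (hA : ∀ i, MeasurableSet (A i)) :
    iIndepSet (fun i ↦ f i ⁻¹' A i) μ :=
  iIndep_of_iIndep_of_le h.iIndep fun i ↦
    MeasurableSpace.generateFrom_le fun _ hs ↦ hs ▸ ⟨A i, hA i, rfl⟩

theorem iIndepFun.iIndepFun_column {β : Type*} [mβ : MeasurableSpace β] {ξ : ι × κ → Ω → β}
    (hξ : ∀ p, Measurable (ξ p)) (h : iIndepFun ξ μ) :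
    iIndepFun (fun k ω i ↦ ξ (i, k) ω) μ := by
  have h_block := h.iIndep.biSup_of_pairwise_disjoint (fun p ↦ (hξ p).comap_le)
    (S := fun k ↦ {p | p.2 = k}) fun k k' hkk' ↦
      disjoint_left.2 fun p hk hk' ↦ hkk' (hk.symm.trans hk')
  refine iIndep_of_iIndep_of_le h_block fun k ↦ Measurable.comap_le ?_
  exact (@measurable_pi_iff _ _ _ (⨆ p ∈ {p : ι × κ | p.2 = k}, mβ.comap (ξ p)) _ _).2 fun i ↦
    Measurable.of_comap_le (le_biSup (fun p ↦ mβ.comap (ξ p)) (rfl : (i, k).2 = k))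

theorem IndepFun.measure_add_add_mul_nonneg_le [IsProbabilityMeasure μ] {X Y : Ω → ℝ}
    (hXY : IndepFun X Y μ) (hX : Measurable X) (hY : Measurable Y) {ε α β : ℝ} (hα : 0 < α)
    (hβ : 0 < β) :
    μ {ω | 0 ≤ ε + α * X ω + β * Y ω} ≤
      1 - μ (X ⁻¹' Iio (-ε / (α + β))) * μ (Y ⁻¹' Iio (-ε / (α + β))) := by
  set a := -ε / (α + β)
  have h_meas : MeasurableSet (X ⁻¹' Iio a ∩ Y ⁻¹' Iio a) :=
    (hX measurableSet_Iio).inter (hY measurableSet_Iio)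
  calc μ {ω | 0 ≤ ε + α * X ω + β * Y ω} ≤ μ (X ⁻¹' Iio a ∩ Y ⁻¹' Iio a)ᶜ :=
        measure_mono fun ω hω hω' ↦
          (add_add_mul_neg_of_lt_neg_div hα hβ hω'.1 hω'.2).not_ge hω
    _ = 1 - μ (X ⁻¹' Iio a) * μ (Y ⁻¹' Iio a) := by
        rw [prob_compl_eq_one_sub h_meas,
          hXY.measure_inter_preimage_eq_mul _ _ measurableSet_Iio measurableSet_Iio]

end ProbabilityTheory

theorem unregularized_reconstruction_empty_general (Θ : Type*) [MeasurableSpace Θ]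
    (P : Measure Θ) [IsProbabilityMeasure P]
    (ξ : Fin 2 × ℕ → Θ → ℝ) (hmeas : ∀ i, Measurable (ξ i))
    (hunif : ∀ i, Measure.map (ξ i) P =
      (2 : ENNReal)⁻¹ • volume.restrict (Set.Icc (-1 : ℝ) 1))
    (hindep : iIndepFun ξ P)
    (η₁ η₂ L ε : ℝ) (hη₁ : 0 < η₁) (hη₂ : 0 < η₂) (hL : 0 < L)
    (hε : ε < η₁ + η₂ * L) :
    P {θ | ∀ n : ℕ, 0 ≤ ε + η₁ * ξ (0, n) θ + η₂ * L * ξ (1, n) θ} = 0 := by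
  set a := -ε / (η₁ + η₂ * L)
  set q := ((2 : ENNReal)⁻¹ • volume.restrict (Icc (-1 : ℝ) 1)) (Iio a)
  have ha : -1 < a := by
    rw [show a = -(ε / (η₁ + η₂ * L)) from neg_div _ _, neg_lt_neg_iff]
    exact (div_lt_one (by positivity)).2 hε
  have hq : q ≠ 0 := (smul_volume_restrict_Icc_Iio_pos (by simp) (by norm_num) ha).ne'
  have h_tail (p : Fin 2 × ℕ) : P (ξ p ⁻¹' Iio a) = q := by
    rw [← Measure.map_apply (hmeas p) measurableSet_Iio, hunif p]
  have h_le (n : ℕ) : P {θ | 0 ≤ ε + η₁ * ξ (0, n) θ + η₂ * L * ξ (1, n) θ} ≤ 1 - q * q := by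
    have h_ne : ((0 : Fin 2), n) ≠ (1, n) := by simp
    calc _ ≤ 1 - P (ξ (0, n) ⁻¹' Iio a) * P (ξ (1, n) ⁻¹' Iio a) :=
          (hindep.indepFun h_ne).measure_add_add_mul_nonneg_le (hmeas _) (hmeas _) hη₁
            (mul_pos hη₂ hL)
      _ = 1 - q * q := by rw [h_tail, h_tail]
  have h_indep := (hindep.iIndepFun_column hmeas).iIndepSet_preimage
    (A := fun _ ↦ {v : Fin 2 → ℝ | 0 ≤ ε + η₁ * v 0 + η₂ * L * v 1}) fun _ ↦
      measurableSet_le measurable_const (by fun_prop)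
  rw [ofPred_forall]
  exact h_indep.measure_iInter_eq_zero
    (ENNReal.sub_lt_self ENNReal.one_ne_top one_ne_zero (mul_ne_zero hq hq)) h_le

/-- If `ξ (i, n)` (`i = 0,1`, `n ∈ ℕ`) is a mutually independent family of random
variables, each uniformly distributed on `[−1,1]`, and `0 < ε < η₁ + η₂ L` with
`η₁, η₂, L > 0`, then the event that `ε + η₁ ξ(0,n) + η₂ L ξ(1,n) ≥ 0` for every
`n ∈ ℕ` has probability zero. -/
theorem unregularized_reconstruction_empty (Θ : Type*) [MeasurableSpace Θ]
    (P : Measure Θ) [IsProbabilityMeasure P]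
    (ξ : Fin 2 × ℕ → Θ → ℝ) (hmeas : ∀ i, Measurable (ξ i))
    (hunif : ∀ i, Measure.map (ξ i) P =
      (2 : ENNReal)⁻¹ • volume.restrict (Set.Icc (-1 : ℝ) 1))
    (hindep : iIndepFun ξ P)
    (η₁ η₂ L ε : ℝ) (hη₁ : 0 < η₁) (hη₂ : 0 < η₂) (hL : 0 < L)
    (hε0 : 0 < ε) (hε : ε < η₁ + η₂ * L) :
    P {θ | ∀ n : ℕ, 0 ≤ ε + η₁ * ξ (0, n) θ + η₂ * L * ξ (1, n) θ} = 0 :=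
  unregularized_reconstruction_empty_general Θ P ξ hmeas hunif hindep η₁ η₂ L ε hη₁ hη₂ hL hε
end
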